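/- arXiv:2206.03081 — 6 statements merged into one kernel-verified Lean document; each statement's English description precedes it below -/
import Mathlib

section
/- Consider the closed-loop system ż = A11 z + p(y), ξ̇1 = v1 − (∂V/∂ξ1)ᵀ, ξ̇2 = ξ3, ξ̇3 = v2 − (∂V/∂ξ2)ᵀ − λ ξ3, y = (ξ1, ξ2), where V(z,ξ) = V1(z + A11⁻¹ p(y)) + V2(y) + (1/2)‖ξ3‖², A11 is invertible, V1 satisfies (∂V1/∂α)·(A11 α) ≤ 0 for all α, V2 is C^1, and λ ≥ 0. Then along any C^1 solution, for all t ≥ 0, d/dt V(z(t),ξ(t)) ≤ v(t)ᵀ ẏ(t) − ‖ξ̇1(t)‖² − λ‖ξ̇2(t)‖², where v = (v1, v2). In particular the system is nonlinear negative imaginary: d/dt V ≤ vᵀ ẏ. -/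
/-!
Write `V = Φ (z, y) + ½‖ξ₃‖²` with `Φ (z, y) = V₁ (z + A₁₁⁻¹ p y) + V₂ y`. Since
`ż = A₁₁ (z + A₁₁⁻¹ p y)`, the `z`-partial of `Φ` contributes `DV₁(w)(A₁₁ w) ≤ 0` with
`w = z + A₁₁⁻¹ p y`, while the `ξ₁`- and `ξ₂`-partials of `Φ` are the gradients `g₁`, `g₂`.
The rest of `V̇` is `ξ̇₁·g₁ + ξ̇₂·g₂ + ξ₃·ξ̇₃`, which the dynamics turn into
`vᵀẏ − ‖ξ̇₁‖² − λ‖ξ̇₂‖²`.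
-/

section Partial

variable {𝕜 E F G : Type*} [NontriviallyNormedField 𝕜]
  [NormedAddCommGroup E] [NormedSpace 𝕜 E] [NormedAddCommGroup F] [NormedSpace 𝕜 F]
  [NormedAddCommGroup G] [NormedSpace 𝕜 G]

theorem fderiv_apply_prod_eq_add {f : E × F → G} {a : E} {b : F}
    (hf : DifferentiableAt 𝕜 f (a, b)) (u : E) (w : F) :
    fderiv 𝕜 f (a, b) (u, w) =
      fderiv 𝕜 (fun x => f (x, b)) a u + fderiv 𝕜 (fun y => f (a, y)) b w := by
  have hleft : HasFDerivAt (fun x => f (x, b)) ((fderiv 𝕜 f (a, b)).comp (.inl 𝕜 E F)) a :=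
    hf.hasFDerivAt.comp a (hasFDerivAt_prodMk_left a b)
  have hright : HasFDerivAt (fun y => f (a, y)) ((fderiv 𝕜 f (a, b)).comp (.inr 𝕜 E F)) b :=
    hf.hasFDerivAt.comp b (hasFDerivAt_prodMk_right a b)
  rw [hleft.fderiv, hright.fderiv, ContinuousLinearMap.comp_apply,
    ContinuousLinearMap.comp_apply, ← map_add]
  simp

theorem DifferentiableAt.hasDerivAt_comp_prodMk {f : E × F → G} {x : 𝕜 → E} {y : 𝕜 → F}
    {x' : E} {y' : F} {t : 𝕜} (hf : DifferentiableAt 𝕜 f (x t, y t)) (hx : HasDerivAt x x' t)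
    (hy : HasDerivAt y y' t) :
    HasDerivAt (fun s => f (x s, y s))
      (fderiv 𝕜 (fun a => f (a, y t)) (x t) x' + fderiv 𝕜 (fun b => f (x t, b)) (y t) y') t := by
  rw [← fderiv_apply_prod_eq_add hf]
  exact hf.hasFDerivAt.comp_hasDerivAt t (hx.prodMk hy)

end Partial

theorem ContinuousLinearMap.apply_eq_sum_mul_single {R n : Type*} [CommSemiring R]
    [TopologicalSpace R] [Fintype n] [DecidableEq n] (L : (n → R) →L[R] R) (x : n → R) :
    L x = ∑ i, x i * L (Pi.single i 1) := by
  conv_lhs => rw [pi_eq_sum_univ' x]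
  simp only [map_sum, map_smul, smul_eq_mul]

theorem hasDerivAt_half_sum_sq {n : Type*} [Fintype n] {x : ℝ → n → ℝ} {x' : n → ℝ} {t : ℝ}
    (hx : HasDerivAt x x' t) :
    HasDerivAt (fun s => (1/2 : ℝ) * ∑ i, (x s i)^2) (∑ i, x t i * x' i) t := by
  refine ((HasDerivAt.fun_sum fun i _ => (hasDerivAt_pi.mp hx i).fun_pow 2).const_mul
    (1/2 : ℝ)).congr_deriv ?_
  rw [Finset.mul_sum]
  exact Finset.sum_congr rfl fun i _ => by ring

theorem power_balance_of_eq_sub {ι κ : Type*} [Fintype ι] [Fintype κ]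
    (v₁ x₁ g₁ : ι → ℝ) (v₂ x₂ g₂ x₃ x₃' : κ → ℝ) (lam : ℝ)
    (h₁ : x₁ = v₁ - g₁) (h₂ : x₂ = x₃) (h₃ : x₃' = v₂ - g₂ - lam • x₃) :
    (∑ i, x₁ i * g₁ i) + (∑ i, x₂ i * g₂ i) + ∑ i, x₃ i * x₃' i =
      ((∑ i, v₁ i * x₁ i) + ∑ i, v₂ i * x₂ i) - (∑ i, (x₁ i)^2) - lam * ∑ i, (x₂ i)^2 := by
  subst h₂
  have e₁ : ∑ i, x₁ i * g₁ i = (∑ i, v₁ i * x₁ i) - ∑ i, (x₁ i)^2 := by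
    rw [← Finset.sum_sub_distrib]
    exact Finset.sum_congr rfl fun i _ => by simp only [h₁, Pi.sub_apply]; ring
  have e₂ : (∑ i, x₂ i * g₂ i) + ∑ i, x₂ i * x₃' i =
      (∑ i, v₂ i * x₂ i) - lam * ∑ i, (x₂ i)^2 := by
    rw [Finset.mul_sum, ← Finset.sum_add_distrib, ← Finset.sum_sub_distrib]
    exact Finset.sum_congr rfl fun i _ => by
      simp only [h₃, Pi.sub_apply, Pi.smul_apply, smul_eq_mul]; ring
  linear_combination e₁ + e₂

theorem hasDerivAt_add_half_sum_sq_of_partials {E ι κ : Type*} [NormedAddCommGroup E]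
    [NormedSpace ℝ E] [Fintype ι] [DecidableEq ι] [Fintype κ] [DecidableEq κ]
    {Φ : E × ((ι → ℝ) × (κ → ℝ)) → ℝ} {V : E → (ι → ℝ) → (κ → ℝ) → (κ → ℝ) → ℝ}
    (hV : ∀ z ξ₁ ξ₂ ξ₃, V z ξ₁ ξ₂ ξ₃ = Φ (z, (ξ₁, ξ₂)) + (1/2) * ∑ i, (ξ₃ i)^2)
    {z : ℝ → E} {ξ₁ : ℝ → ι → ℝ} {ξ₂ ξ₃ : ℝ → κ → ℝ} {z' : E} {ξ₁' : ι → ℝ} {ξ₂' ξ₃' : κ → ℝ}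
    {t : ℝ} (hΦ : DifferentiableAt ℝ Φ (z t, (ξ₁ t, ξ₂ t))) (hz : HasDerivAt z z' t)
    (hξ₁ : HasDerivAt ξ₁ ξ₁' t) (hξ₂ : HasDerivAt ξ₂ ξ₂' t) (hξ₃ : HasDerivAt ξ₃ ξ₃' t) :
    HasDerivAt (fun s => V (z s) (ξ₁ s) (ξ₂ s) (ξ₃ s))
      (fderiv ℝ (fun a => Φ (a, (ξ₁ t, ξ₂ t))) (z t) z' +
        ((∑ i, ξ₁' i * fderiv ℝ (fun a => V (z t) a (ξ₂ t) (ξ₃ t)) (ξ₁ t) (Pi.single i 1)) +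
          (∑ i, ξ₂' i * fderiv ℝ (fun a => V (z t) (ξ₁ t) a (ξ₃ t)) (ξ₂ t) (Pi.single i 1)) +
          ∑ i, ξ₃ t i * ξ₃' i)) t := by
  have hy_partial : fderiv ℝ (fun b => Φ (z t, b)) (ξ₁ t, ξ₂ t) (ξ₁', ξ₂') =
      (∑ i, ξ₁' i * fderiv ℝ (fun a => V (z t) a (ξ₂ t) (ξ₃ t)) (ξ₁ t) (Pi.single i 1)) +
        ∑ i, ξ₂' i * fderiv ℝ (fun a => V (z t) (ξ₁ t) a (ξ₃ t)) (ξ₂ t) (Pi.single i 1) := by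
    rw [fderiv_apply_prod_eq_add (by fun_prop)]
    simp only [hV, fderiv_add_const]
    exact congrArg₂ (· + ·) (ContinuousLinearMap.apply_eq_sum_mul_single _ _)
      (ContinuousLinearMap.apply_eq_sum_mul_single _ _)
  have h := (hΦ.hasDerivAt_comp_prodMk hz (hξ₁.prodMk hξ₂)).fun_add (hasDerivAt_half_sum_sq hξ₃)
  rw [hy_partial, add_assoc] at h
  simpa only [hV] using h

theorem Matrix.mulVec_add_inv_mulVec {R n : Type*} [CommRing R] [Fintype n] [DecidableEq n]
    {A : Matrix n n R} (hA : IsUnit A.det) (z u : n → R) :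
    A.mulVec (z + A⁻¹.mulVec u) = A.mulVec z + u := by
  rw [Matrix.mulVec_add, Matrix.mulVec_mulVec, Matrix.mul_nonsing_inv _ hA, Matrix.one_mulVec]

theorem stmt1_general (m p1 p2 : ℕ)
    (A11 : Matrix (Fin m) (Fin m) ℝ) (hA : IsUnit A11.det)
    (p : ((Fin p1 → ℝ) × (Fin p2 → ℝ)) → (Fin m → ℝ)) (hpC : ContDiff ℝ 1 p)
    (V1 : (Fin m → ℝ) → ℝ) (hV1C : ContDiff ℝ 1 V1)
    (hV1dec : ∀ α : Fin m → ℝ, fderiv ℝ V1 α (A11.mulVec α) ≤ 0)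
    (V2 : ((Fin p1 → ℝ) × (Fin p2 → ℝ)) → ℝ) (hV2C : ContDiff ℝ 1 V2)
    (lam : ℝ) (hlam : 0 ≤ lam)
    (V : (Fin m → ℝ) → (Fin p1 → ℝ) → (Fin p2 → ℝ) → (Fin p2 → ℝ) → ℝ)
    (hV : ∀ z ξ1 ξ2 ξ3, V z ξ1 ξ2 ξ3 =
      V1 (z + A11⁻¹.mulVec (p (ξ1, ξ2))) + V2 (ξ1, ξ2) + (1/2) * ∑ i, (ξ3 i)^2)
    -- the gradients of V with respect to ξ1 and ξ2
    (g1 : (Fin m → ℝ) → (Fin p1 → ℝ) → (Fin p2 → ℝ) → (Fin p2 → ℝ) → (Fin p1 → ℝ))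
    (hg1 : ∀ z ξ1 ξ2 ξ3 i, g1 z ξ1 ξ2 ξ3 i =
      fderiv ℝ (fun a => V z a ξ2 ξ3) ξ1 (Pi.single i 1))
    (g2 : (Fin m → ℝ) → (Fin p1 → ℝ) → (Fin p2 → ℝ) → (Fin p2 → ℝ) → (Fin p2 → ℝ))
    (hg2 : ∀ z ξ1 ξ2 ξ3 i, g2 z ξ1 ξ2 ξ3 i =
      fderiv ℝ (fun a => V z ξ1 a ξ3) ξ2 (Pi.single i 1))
    -- a C¹ solution of the closed-loop system
    (z : ℝ → Fin m → ℝ) (ξ1 : ℝ → Fin p1 → ℝ) (ξ2 ξ3 : ℝ → Fin p2 → ℝ)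
    (v1 : ℝ → Fin p1 → ℝ) (v2 : ℝ → Fin p2 → ℝ)
    (z' : ℝ → Fin m → ℝ) (ξ1' : ℝ → Fin p1 → ℝ) (ξ2' ξ3' : ℝ → Fin p2 → ℝ)
    (hz : ∀ t, HasDerivAt z (z' t) t) (hdξ1 : ∀ t, HasDerivAt ξ1 (ξ1' t) t)
    (hdξ2 : ∀ t, HasDerivAt ξ2 (ξ2' t) t) (hdξ3 : ∀ t, HasDerivAt ξ3 (ξ3' t) t)
    (hz' : ∀ t, z' t = A11.mulVec (z t) + p (ξ1 t, ξ2 t))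
    (hξ1' : ∀ t, ξ1' t = v1 t - g1 (z t) (ξ1 t) (ξ2 t) (ξ3 t))
    (hξ2' : ∀ t, ξ2' t = ξ3 t)
    (hξ3' : ∀ t, ξ3' t = v2 t - g2 (z t) (ξ1 t) (ξ2 t) (ξ3 t) - lam • ξ3 t) :
    ∀ t : ℝ, 0 ≤ t →
      deriv (fun s => V (z s) (ξ1 s) (ξ2 s) (ξ3 s)) t ≤
        ((∑ i, v1 t i * ξ1' t i) + ∑ i, v2 t i * ξ2' t i)
          - (∑ i, (ξ1' t i)^2) - lam * ∑ i, (ξ2' t i)^2 ∧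
      deriv (fun s => V (z s) (ξ1 s) (ξ2 s) (ξ3 s)) t ≤
        (∑ i, v1 t i * ξ1' t i) + ∑ i, v2 t i * ξ2' t i := by
  intro t _
  set Φ : (Fin m → ℝ) × ((Fin p1 → ℝ) × (Fin p2 → ℝ)) → ℝ :=
    fun q => V1 (q.1 + A11⁻¹.mulVec (p q.2)) + V2 q.2 with hΦ
  have hΦdiff : Differentiable ℝ Φ := by
    have := hpC.differentiable one_ne_zero
    have := hV1C.differentiable one_ne_zero
    have := hV2C.differentiable one_ne_zero
    have : Differentiable ℝ A11⁻¹.mulVec :=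
      (Matrix.mulVecLin A11⁻¹).toContinuousLinearMap.differentiable
    fun_prop
  set w := z t + A11⁻¹.mulVec (p (ξ1 t, ξ2 t))
  have hz_partial : fderiv ℝ (fun a => Φ (a, (ξ1 t, ξ2 t))) (z t) = fderiv ℝ V1 w := by
    simp only [hΦ, fderiv_add_const, fderiv_comp_add_right]
    rfl
  have hzw : z' t = A11.mulVec w := by rw [hz', Matrix.mulVec_add_inv_mulVec hA]
  have hderiv := hasDerivAt_add_half_sum_sq_of_partials (Φ := Φ) hV (hΦdiff _) (hz t) (hdξ1 t)
    (hdξ2 t) (hdξ3 t)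
  simp only [← hg1, ← hg2, hz_partial, hzw] at hderiv
  rw [hderiv.deriv, power_balance_of_eq_sub _ _ _ _ _ _ _ _ lam (hξ1' t) (hξ2' t) (hξ3' t)]
  have hdiss : fderiv ℝ V1 w (A11.mulVec w) ≤ 0 := hV1dec w
  have hsq1 : 0 ≤ ∑ i, (ξ1' t i)^2 := Finset.sum_nonneg fun i _ => sq_nonneg _
  have hsq2 : 0 ≤ lam * ∑ i, (ξ2' t i)^2 :=
    mul_nonneg hlam (Finset.sum_nonneg fun i _ => sq_nonneg _)
  constructor <;> linarith

/-- the closed-loop system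
ż = A11 z + p(y), ξ̇1 = v1 − (∂V/∂ξ1)ᵀ, ξ̇2 = ξ3, ξ̇3 = v2 − (∂V/∂ξ2)ᵀ − λξ3,
y = (ξ1,ξ2), with V(z,ξ) = V1(z + A11⁻¹p(y)) + V2(y) + (1/2)‖ξ3‖², satisfies
along any C¹ solution, for all t ≥ 0,
d/dt V ≤ vᵀẏ − ‖ξ̇1‖² − λ‖ξ̇2‖², and in particular d/dt V ≤ vᵀẏ (nonlinear NI). -/
theorem stmt1 (m p1 p2 : ℕ)
    (A11 : Matrix (Fin m) (Fin m) ℝ) (hA : IsUnit A11.det)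
    (p : ((Fin p1 → ℝ) × (Fin p2 → ℝ)) → (Fin m → ℝ)) (hpC : ContDiff ℝ 1 p)
    (hp0 : p 0 = 0)
    (V1 : (Fin m → ℝ) → ℝ) (hV1C : ContDiff ℝ 1 V1)
    (hV1dec : ∀ α : Fin m → ℝ, fderiv ℝ V1 α (A11.mulVec α) ≤ 0)
    (V2 : ((Fin p1 → ℝ) × (Fin p2 → ℝ)) → ℝ) (hV2C : ContDiff ℝ 1 V2)
    (lam : ℝ) (hlam : 0 ≤ lam)
    (V : (Fin m → ℝ) → (Fin p1 → ℝ) → (Fin p2 → ℝ) → (Fin p2 → ℝ) → ℝ)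
    (hV : ∀ z ξ1 ξ2 ξ3, V z ξ1 ξ2 ξ3 =
      V1 (z + A11⁻¹.mulVec (p (ξ1, ξ2))) + V2 (ξ1, ξ2) + (1/2) * ∑ i, (ξ3 i)^2)
    -- the gradients of V with respect to ξ1 and ξ2
    (g1 : (Fin m → ℝ) → (Fin p1 → ℝ) → (Fin p2 → ℝ) → (Fin p2 → ℝ) → (Fin p1 → ℝ))
    (hg1 : ∀ z ξ1 ξ2 ξ3 i, g1 z ξ1 ξ2 ξ3 i =
      fderiv ℝ (fun a => V z a ξ2 ξ3) ξ1 (Pi.single i 1))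
    (g2 : (Fin m → ℝ) → (Fin p1 → ℝ) → (Fin p2 → ℝ) → (Fin p2 → ℝ) → (Fin p2 → ℝ))
    (hg2 : ∀ z ξ1 ξ2 ξ3 i, g2 z ξ1 ξ2 ξ3 i =
      fderiv ℝ (fun a => V z ξ1 a ξ3) ξ2 (Pi.single i 1))
    -- a C¹ solution of the closed-loop system
    (z : ℝ → Fin m → ℝ) (ξ1 : ℝ → Fin p1 → ℝ) (ξ2 ξ3 : ℝ → Fin p2 → ℝ)
    (v1 : ℝ → Fin p1 → ℝ) (v2 : ℝ → Fin p2 → ℝ)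
    (z' : ℝ → Fin m → ℝ) (ξ1' : ℝ → Fin p1 → ℝ) (ξ2' ξ3' : ℝ → Fin p2 → ℝ)
    (hz : ∀ t, HasDerivAt z (z' t) t) (hdξ1 : ∀ t, HasDerivAt ξ1 (ξ1' t) t)
    (hdξ2 : ∀ t, HasDerivAt ξ2 (ξ2' t) t) (hdξ3 : ∀ t, HasDerivAt ξ3 (ξ3' t) t)
    (hz' : ∀ t, z' t = A11.mulVec (z t) + p (ξ1 t, ξ2 t))
    (hξ1' : ∀ t, ξ1' t = v1 t - g1 (z t) (ξ1 t) (ξ2 t) (ξ3 t))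
    (hξ2' : ∀ t, ξ2' t = ξ3 t)
    (hξ3' : ∀ t, ξ3' t = v2 t - g2 (z t) (ξ1 t) (ξ2 t) (ξ3 t) - lam • ξ3 t) :
    ∀ t : ℝ, 0 ≤ t →
      deriv (fun s => V (z s) (ξ1 s) (ξ2 s) (ξ3 s)) t ≤
        ((∑ i, v1 t i * ξ1' t i) + ∑ i, v2 t i * ξ2' t i)
          - (∑ i, (ξ1' t i)^2) - lam * ∑ i, (ξ2' t i)^2 ∧
      deriv (fun s => V (z s) (ξ1 s) (ξ2 s) (ξ3 s)) t ≤
        (∑ i, v1 t i * ξ1' t i) + ∑ i, v2 t i * ξ2' t i :=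
  stmt1_general m p1 p2 A11 hA p hpC V1 hV1C hV1dec V2 hV2C lam hlam V hV g1 hg1 g2 hg2 z ξ1 ξ2 ξ3
    v1 v2 z' ξ1' ξ2' ξ3' hz hdξ1 hdξ2 hdξ3 hz' hξ1' hξ2' hξ3'
end

section
/- Suppose the system ż = A11 z + p(y), ξ̇1 = v1 + k1(z,ξ), ξ̇2 = ξ3, ξ̇3 = v2 + k2(z,ξ), y = (ξ1, ξ2) admits a C^1 positive definite storage function V(z,ξ) satisfying V̇ ≤ vᵀẏ along all trajectories. Then the matrix A11 is Lyapunov stable; that is, for the linear system ż = A11 z, the function z ↦ V(z, 0) is a positive definite Lyapunov function with nonincreasing value along solutions, and hence every eigenvalue of A11 lies in the closed left half-plane with purely imaginary eigenvalues semisimple. -/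
/-!
Feeding the input `v = -k(z, 0)` keeps `ξ ≡ 0`, hence `y ≡ 0` and the supply rate `vᵀẏ` vanishes,
so `V(·, 0)` is a Lyapunov function for `ż = A₁₁ z`. A continuous positive definite Lyapunov
function makes the origin stable, and since the system is linear, rescaling turns stability into
boundedness of every solution on `[0, ∞)`. Complex solutions are then bounded as well, their real
and imaginary parts being real solutions. This rules out an eigenvalue `μ` with `Re μ > 0` (the
solution `e^{μt} a`) and a Jordan chain `(A - μ) b = a ≠ 0`, `(A - μ) a = 0` with `Re μ = 0`
(the solution `e^{μt} (b + t a)` grows linearly).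
-/

open scoped BigOperators

/-- A real square matrix is Lyapunov stable if its spectrum lies in the closed left
half-plane and every purely imaginary eigenvalue is semisimple. -/
def LyapunovStableMatrix {n : ℕ} (A : Matrix (Fin n) (Fin n) ℝ) : Prop :=
  ∀ μ ∈ spectrum ℂ (A.map (algebraMap ℝ ℂ)), μ.re ≤ 0 ∧
    (μ.re = 0 → ∀ v : Fin n → ℂ,
      ((A.map (algebraMap ℝ ℂ) - μ • 1) * (A.map (algebraMap ℝ ℂ) - μ • 1)).mulVec v = 0 →
      (A.map (algebraMap ℝ ℂ) - μ • 1).mulVec v = 0)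

open Matrix Filter

section LinearODE

variable {ι 𝕜 : Type*} [Fintype ι] [RCLike 𝕜]

def IsLinearODESolution (A : Matrix ι ι 𝕜) (w : ℝ → ι → 𝕜) : Prop :=
  ∀ t, HasDerivAt w (A *ᵥ w t) t

def HasBoundedForwardSolutions (A : Matrix ι ι 𝕜) : Prop :=
  ∀ w, IsLinearODESolution A w → ∃ C, ∀ t, 0 ≤ t → ‖w t‖ ≤ C

lemma IsLinearODESolution.const_smul {A : Matrix ι ι 𝕜} {w : ℝ → ι → 𝕜}
    (hw : IsLinearODESolution A w) (c : 𝕜) : IsLinearODESolution A (fun t => c • w t) := by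
  intro t
  have := (hw t).const_smul c
  rwa [← mulVec_smul] at this

lemma HasBoundedForwardSolutions.not_tendsto_norm_atTop {A : Matrix ι ι 𝕜}
    (hA : HasBoundedForwardSolutions A) {w : ℝ → ι → 𝕜} (hw : IsLinearODESolution A w) :
    ¬ Tendsto (fun t => ‖w t‖) atTop atTop := fun htop => by
  obtain ⟨C, hC⟩ := hA w hw
  obtain ⟨t, ht, hCt⟩ := ((eventually_ge_atTop 0).and (htop.eventually_gt_atTop C)).exists
  exact (hC t ht).not_gt hCt

end LinearODE

section RealSystem

variable {ι : Type*} [Fintype ι] {A : Matrix ι ι ℝ}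

lemma IsLinearODESolution.comp_clm {c : ℝ → ι → ℂ}
    (hc : IsLinearODESolution (A.map (algebraMap ℝ ℂ)) c) (L : ℂ →L[ℝ] ℝ) :
    IsLinearODESolution A (fun t i => L (c t i)) := by
  intro t
  refine hasDerivAt_pi.2 fun i => ?_
  refine (L.hasFDerivAt.comp_hasDerivAt t (hasDerivAt_pi.1 (hc t) i)).congr_deriv ?_
  simp [mulVec, dotProduct, ← Complex.real_smul]

lemma HasBoundedForwardSolutions.map_complex (hA : HasBoundedForwardSolutions A) :
    HasBoundedForwardSolutions (A.map (algebraMap ℝ ℂ)) := by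
  intro c hc
  obtain ⟨Cre, hCre⟩ := hA _ (hc.comp_clm Complex.reCLM)
  obtain ⟨Cim, hCim⟩ := hA _ (hc.comp_clm Complex.imCLM)
  refine ⟨Cre + Cim, fun t ht => ?_⟩
  have hC : 0 ≤ Cre + Cim := add_nonneg ((norm_nonneg _).trans (hCre 0 le_rfl))
    ((norm_nonneg _).trans (hCim 0 le_rfl))
  refine (pi_norm_le_iff_of_nonneg hC).2 fun i => ?_
  calc ‖c t i‖ ≤ |(c t i).re| + |(c t i).im| := Complex.norm_le_abs_re_add_abs_im _
    _ ≤ Cre + Cim := add_le_add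
        ((norm_le_pi_norm (fun i => (c t i).re) i).trans (hCre t ht))
        ((norm_le_pi_norm (fun i => (c t i).im) i).trans (hCim t ht))

variable {V : (ι → ℝ) → ℝ}

lemma exists_forall_norm_lt_one_of_lyapunov (hV : Continuous V) (hV0 : V 0 = 0)
    (hVpos : ∀ z, z ≠ 0 → 0 < V z)
    (hmono : ∀ w, IsLinearODESolution A w → ∀ t, 0 ≤ t → V (w t) ≤ V (w 0)) :
    ∃ δ > 0, ∀ w, IsLinearODESolution A w → ‖w 0‖ < δ → ∀ t, 0 ≤ t → ‖w t‖ < 1 := by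
  obtain ⟨a, ha, haV⟩ := (isCompact_sphere (0 : ι → ℝ) 1).exists_forall_le' hV.continuousOn
    fun z hz => hVpos z (ne_zero_of_mem_unit_sphere ⟨z, hz⟩)
  obtain ⟨δ, hδ, hδV⟩ := Metric.continuousAt_iff.1 hV.continuousAt a ha
  refine ⟨min δ 1, lt_min hδ one_pos, fun w hw hw0 t ht => ?_⟩
  by_contra! hwt
  obtain ⟨s, hs, hws⟩ := intermediate_value_Icc ht
    (continuous_iff_continuousAt.2 fun t => (hw t).continuousAt).norm.continuousOn
    ⟨(hw0.trans_le (min_le_right _ _)).le, hwt⟩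
  have hVw0 : V (w 0) < a := by
    have := hδV (x := w 0) (by rw [dist_zero_right]; exact hw0.trans_le (min_le_left _ _))
    rw [Real.dist_eq, hV0, sub_zero] at this
    exact (le_abs_self _).trans_lt this
  have := haV (w s) (by simpa using hws)
  linarith [hmono w hw s hs.1]

lemma hasBoundedForwardSolutions_of_lyapunov (hV : Continuous V) (hV0 : V 0 = 0)
    (hVpos : ∀ z, z ≠ 0 → 0 < V z)
    (hmono : ∀ w, IsLinearODESolution A w → ∀ t, 0 ≤ t → V (w t) ≤ V (w 0)) :
    HasBoundedForwardSolutions A := by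
  obtain ⟨δ, hδ, hstable⟩ := exists_forall_norm_lt_one_of_lyapunov hV hV0 hVpos hmono
  intro w hw
  set c := δ / (‖w 0‖ + 1)
  have hc : 0 < c := by positivity
  have hcw0 : ‖c • w 0‖ < δ := by
    rw [norm_smul, Real.norm_of_nonneg hc.le, div_mul_eq_mul_div, div_lt_iff₀ (by positivity)]
    nlinarith [norm_nonneg (w 0)]
  refine ⟨1 / c, fun t ht => ?_⟩
  have := hstable _ (hw.const_smul c) hcw0 t ht
  rw [norm_smul, Real.norm_of_nonneg hc.le] at this
  rw [le_div_iff₀ hc]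
  linarith

end RealSystem

lemma Matrix.exists_mulVec_eq_smul_of_mem_spectrum {n K : Type*} [Fintype n] [DecidableEq n]
    [Field K] {A : Matrix n n K} {μ : K} (hμ : μ ∈ spectrum K A) : ∃ v ≠ 0, A *ᵥ v = μ • v := by
  rw [← spectrum_toLin', ← Module.End.hasEigenvalue_iff_mem_spectrum] at hμ
  obtain ⟨v, hv⟩ := hμ.exists_hasEigenvector
  exact ⟨v, hv.2, by simpa using hv.apply_eq_smul⟩

lemma isLinearODESolution_cexp_smul {ι : Type*} [Fintype ι] {A : Matrix ι ι ℂ} {μ : ℂ}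
    {u v : ι → ℂ} (hu : A *ᵥ u = μ • u) (hv : A *ᵥ v = μ • v + u) :
    IsLinearODESolution A (fun t : ℝ => Complex.exp (t * μ) • (v + t • u)) := by
  intro t
  have hexp : HasDerivAt (fun s : ℝ => Complex.exp (s * μ)) (Complex.exp (t * μ) * μ) t := by
    simpa using ((Complex.ofRealCLM.hasDerivAt (x := t)).mul_const μ).cexp
  have hlin : HasDerivAt (fun s : ℝ => v + s • u) u t := by
    simpa using ((hasDerivAt_id t).smul_const u).const_add v
  refine (hexp.smul hlin).congr_deriv ?_
  rw [mulVec_smul, mulVec_add, mulVec_smul, hu, hv]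
  module

lemma norm_cexp_ofReal_mul_smul {E : Type*} [SeminormedAddCommGroup E] [NormedSpace ℂ E]
    (t : ℝ) (μ : ℂ) (x : E) : ‖Complex.exp (t * μ) • x‖ = Real.exp (t * μ.re) * ‖x‖ := by
  rw [norm_smul, Complex.norm_exp, Complex.re_ofReal_mul]

lemma lyapunovStableMatrix_of_hasBoundedForwardSolutions {n : ℕ} {A : Matrix (Fin n) (Fin n) ℝ}
    (hA : HasBoundedForwardSolutions A) : LyapunovStableMatrix A := by
  intro μ hμ
  set Ac := A.map (algebraMap ℝ ℂ)
  have hAc : HasBoundedForwardSolutions Ac := hA.map_complex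
  refine ⟨?_, fun hre v hNN => ?_⟩
  · by_contra! hre
    obtain ⟨v, hv0, hv⟩ := exists_mulVec_eq_smul_of_mem_spectrum hμ
    refine hAc.not_tendsto_norm_atTop
      (isLinearODESolution_cexp_smul (u := 0) (by simp) (by simpa using hv)) ?_
    simp only [smul_zero, add_zero, norm_cexp_ofReal_mul_smul]
    exact (Real.tendsto_exp_atTop.comp (tendsto_id.atTop_mul_const hre)).atTop_mul_const
      (norm_pos_iff.2 hv0)
  · by_contra hu0
    set u := (Ac - μ • 1) *ᵥ v
    have hu : Ac *ᵥ u = μ • u := by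
      rw [← sub_eq_zero, ← hNN, ← mulVec_mulVec, sub_mulVec, smul_mulVec, one_mulVec]
    have hv : Ac *ᵥ v = μ • v + u := by
      simp only [u, sub_mulVec, smul_mulVec, one_mulVec]
      abel
    refine hAc.not_tendsto_norm_atTop (isLinearODESolution_cexp_smul hu hv) ?_
    simp only [norm_cexp_ofReal_mul_smul, hre, mul_zero, Real.exp_zero, one_mul]
    refine tendsto_atTop_mono (fun t => ?_) (tendsto_atTop_add_const_right _ (-‖v‖)
      (tendsto_id.atTop_mul_const (norm_pos_iff.2 hu0)))
    dsimp only [id]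
    have htu := norm_sub_le (v + t • u) v
    rw [add_sub_cancel_left, norm_smul, Real.norm_eq_abs] at htu
    nlinarith [le_abs_self t, norm_nonneg u]

theorem stmt3_general (m p1 p2 : ℕ)
    (A11 : Matrix (Fin m) (Fin m) ℝ)
    (p : ((Fin p1 → ℝ) × (Fin p2 → ℝ)) → (Fin m → ℝ)) (hp0 : p 0 = 0)
    (k1 : (Fin m → ℝ) → (Fin p1 → ℝ) → (Fin p2 → ℝ) → (Fin p2 → ℝ) → (Fin p1 → ℝ))
    (k2 : (Fin m → ℝ) → (Fin p1 → ℝ) → (Fin p2 → ℝ) → (Fin p2 → ℝ) → (Fin p2 → ℝ))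
    (V : (Fin m → ℝ) → (Fin p1 → ℝ) → (Fin p2 → ℝ) → (Fin p2 → ℝ) → ℝ)
    (hVC : ContDiff ℝ 1 fun x : (Fin m → ℝ) × (Fin p1 → ℝ) × (Fin p2 → ℝ) × (Fin p2 → ℝ) =>
      V x.1 x.2.1 x.2.2.1 x.2.2.2)
    (hV0 : V 0 0 0 0 = 0)
    (hVpos : ∀ z ξ1 ξ2 ξ3, (z, ξ1, ξ2, ξ3) ≠ (0, 0, 0, 0) → 0 < V z ξ1 ξ2 ξ3)
    -- the NI dissipation inequality V̇ ≤ vᵀẏ holds along all C¹ trajectories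
    (hNI : ∀ (z : ℝ → Fin m → ℝ) (ξ1 : ℝ → Fin p1 → ℝ) (ξ2 ξ3 : ℝ → Fin p2 → ℝ)
      (v1 : ℝ → Fin p1 → ℝ) (v2 : ℝ → Fin p2 → ℝ)
      (z' : ℝ → Fin m → ℝ) (ξ1' : ℝ → Fin p1 → ℝ) (ξ2' ξ3' : ℝ → Fin p2 → ℝ),
      (∀ t, HasDerivAt z (z' t) t) → (∀ t, HasDerivAt ξ1 (ξ1' t) t) →
      (∀ t, HasDerivAt ξ2 (ξ2' t) t) → (∀ t, HasDerivAt ξ3 (ξ3' t) t) →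
      (∀ t, z' t = A11.mulVec (z t) + p (ξ1 t, ξ2 t)) →
      (∀ t, ξ1' t = v1 t + k1 (z t) (ξ1 t) (ξ2 t) (ξ3 t)) →
      (∀ t, ξ2' t = ξ3 t) →
      (∀ t, ξ3' t = v2 t + k2 (z t) (ξ1 t) (ξ2 t) (ξ3 t)) →
      ∀ t : ℝ, 0 ≤ t →
        deriv (fun s => V (z s) (ξ1 s) (ξ2 s) (ξ3 s)) t ≤
          (∑ i, v1 t i * ξ1' t i) + ∑ i, v2 t i * ξ2' t i) :
    (∀ w : ℝ → Fin m → ℝ, (∀ t, HasDerivAt w (A11.mulVec (w t)) t) →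
      ∀ s t : ℝ, 0 ≤ s → s ≤ t → V (w t) 0 0 0 ≤ V (w s) 0 0 0) ∧
    LyapunovStableMatrix A11 := by
  have hVz : ContDiff ℝ 1 fun z => V z 0 0 0 :=
    hVC.comp (contDiff_id.prodMk (contDiff_const (c := (0, 0, 0))))
  have hmono : ∀ w, IsLinearODESolution A11 w →
      AntitoneOn (fun t => V (w t) 0 0 0) (Set.Ici 0) := by
    intro w hw
    have hderiv := hNI w 0 0 0 (fun t => -k1 (w t) 0 0 0) (fun t => -k2 (w t) 0 0 0)
      (fun t => A11 *ᵥ w t) 0 0 0 hw (fun t => hasDerivAt_const t 0)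
      (fun t => hasDerivAt_const t 0) (fun t => hasDerivAt_const t 0)
      (fun t => by simp [Prod.mk_zero_zero, hp0]) (fun t => by simp) (fun t => rfl)
      (fun t => by simp)
    have hdiff : Differentiable ℝ fun t => V (w t) 0 0 0 :=
      (hVz.differentiable one_ne_zero).comp fun t => (hw t).differentiableAt
    refine antitoneOn_of_deriv_nonpos (convex_Ici 0) hdiff.continuous.continuousOn
      hdiff.differentiableOn fun t ht => ?_
    simpa using hderiv t (interior_subset ht)
  refine ⟨fun w hw s t hs hst => hmono w hw hs (hs.trans hst) hst,
    lyapunovStableMatrix_of_hasBoundedForwardSolutions ?_⟩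
  exact hasBoundedForwardSolutions_of_lyapunov hVz.continuous hV0
    (fun z hz => hVpos z 0 0 0 (by simp [hz]))
    fun w hw t ht => hmono w hw Set.self_mem_Ici ht ht

/-- necessity: if the feedback-transformed system
ż = A11 z + p(y), ξ̇1 = v1 + k1(z,ξ), ξ̇2 = ξ3, ξ̇3 = v2 + k2(z,ξ), y = (ξ1,ξ2)
admits a C¹ positive definite storage V with V̇ ≤ vᵀẏ along all C¹ trajectories,
then z ↦ V(z,0) is nonincreasing along the solutions of ż = A11 z, and A11 is
Lyapunov stable. -/
theorem stmt3 (m p1 p2 : ℕ)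
    (A11 : Matrix (Fin m) (Fin m) ℝ)
    (p : ((Fin p1 → ℝ) × (Fin p2 → ℝ)) → (Fin m → ℝ)) (hp0 : p 0 = 0)
    (k1 : (Fin m → ℝ) → (Fin p1 → ℝ) → (Fin p2 → ℝ) → (Fin p2 → ℝ) → (Fin p1 → ℝ))
    (k2 : (Fin m → ℝ) → (Fin p1 → ℝ) → (Fin p2 → ℝ) → (Fin p2 → ℝ) → (Fin p2 → ℝ))
    (hk1 : Continuous fun x : (Fin m → ℝ) × (Fin p1 → ℝ) × (Fin p2 → ℝ) × (Fin p2 → ℝ) =>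
      k1 x.1 x.2.1 x.2.2.1 x.2.2.2)
    (hk2 : Continuous fun x : (Fin m → ℝ) × (Fin p1 → ℝ) × (Fin p2 → ℝ) × (Fin p2 → ℝ) =>
      k2 x.1 x.2.1 x.2.2.1 x.2.2.2)
    (V : (Fin m → ℝ) → (Fin p1 → ℝ) → (Fin p2 → ℝ) → (Fin p2 → ℝ) → ℝ)
    (hVC : ContDiff ℝ 1 fun x : (Fin m → ℝ) × (Fin p1 → ℝ) × (Fin p2 → ℝ) × (Fin p2 → ℝ) =>
      V x.1 x.2.1 x.2.2.1 x.2.2.2)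
    (hV0 : V 0 0 0 0 = 0)
    (hVpos : ∀ z ξ1 ξ2 ξ3, (z, ξ1, ξ2, ξ3) ≠ (0, 0, 0, 0) → 0 < V z ξ1 ξ2 ξ3)
    -- the NI dissipation inequality V̇ ≤ vᵀẏ holds along all C¹ trajectories
    (hNI : ∀ (z : ℝ → Fin m → ℝ) (ξ1 : ℝ → Fin p1 → ℝ) (ξ2 ξ3 : ℝ → Fin p2 → ℝ)
      (v1 : ℝ → Fin p1 → ℝ) (v2 : ℝ → Fin p2 → ℝ)
      (z' : ℝ → Fin m → ℝ) (ξ1' : ℝ → Fin p1 → ℝ) (ξ2' ξ3' : ℝ → Fin p2 → ℝ),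
      (∀ t, HasDerivAt z (z' t) t) → (∀ t, HasDerivAt ξ1 (ξ1' t) t) →
      (∀ t, HasDerivAt ξ2 (ξ2' t) t) → (∀ t, HasDerivAt ξ3 (ξ3' t) t) →
      (∀ t, z' t = A11.mulVec (z t) + p (ξ1 t, ξ2 t)) →
      (∀ t, ξ1' t = v1 t + k1 (z t) (ξ1 t) (ξ2 t) (ξ3 t)) →
      (∀ t, ξ2' t = ξ3 t) →
      (∀ t, ξ3' t = v2 t + k2 (z t) (ξ1 t) (ξ2 t) (ξ3 t)) →
      ∀ t : ℝ, 0 ≤ t →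
        deriv (fun s => V (z s) (ξ1 s) (ξ2 s) (ξ3 s)) t ≤
          (∑ i, v1 t i * ξ1' t i) + ∑ i, v2 t i * ξ2' t i) :
    (∀ w : ℝ → Fin m → ℝ, (∀ t, HasDerivAt w (A11.mulVec (w t)) t) →
      ∀ s t : ℝ, 0 ≤ s → s ≤ t → V (w t) 0 0 0 ≤ V (w s) 0 0 0) ∧
    LyapunovStableMatrix A11 :=
  stmt3_general m p1 p2 A11 p hp0 k1 k2 V hVC hV0 hVpos hNI
end

section
/- Consider a nominal plant made nonlinear OSNI with storage V(z,ξ) and output-strictness ε > 0 interconnected in positive feedback with an uncertainty system H_σ: ẋ_σ = f_σ(x_σ, u_σ), y_σ = h_σ(x_σ), which is nonlinear OSNI with C^1 positive semidefinite storage V_σ and strictness ε_σ > 0, via w = y_σ and u_σ = y. Define W(z,ξ,x_σ) = V(z,ξ) + V_σ(x_σ) − h_σ(x_σ)ᵀ y, with y = (ξ1,ξ2). Then along any C^1 trajectory of the interconnection, Ẇ ≤ −ε‖ẏ‖² − ε_σ‖ẇ‖² ≤ 0. -/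
open Finset

section

variable {ι : Type*} [Fintype ι]

theorem HasDerivAt.sum_mul_apply {f g : ℝ → ι → ℝ} {f' g' : ι → ℝ} {t : ℝ}
    (hf : HasDerivAt f f' t) (hg : HasDerivAt g g' t) :
    HasDerivAt (fun s => ∑ i, f s i * g s i) (∑ i, f' i * g t i + ∑ i, f t i * g' i) t := by
  rw [← sum_add_distrib]
  exact HasDerivAt.fun_sum fun i _ =>
    (hasDerivAt_pi.1 hf i).mul (hasDerivAt_pi.1 hg i)

/-- The cross term `wᵀy` has derivative `ẇᵀy + wᵀẏ`, which cancels exactly the supply rates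
`wᵀẏ` and `yᵀẇ` of the two dissipation inequalities. -/
theorem deriv_add_sub_sum_mul_le_of_dissipation {V Vσ : ℝ → ℝ} {w y : ℝ → ι → ℝ}
    {w' y' : ι → ℝ} {ε εσ t : ℝ} (hV : DifferentiableAt ℝ V t)
    (hVσ : DifferentiableAt ℝ Vσ t) (hw : HasDerivAt w w' t) (hy : HasDerivAt y y' t)
    (hplant : deriv V t ≤ ∑ i, w t i * y' i - ε * ∑ i, y' i ^ 2)
    (hunc : deriv Vσ t ≤ ∑ i, y t i * w' i - εσ * ∑ i, w' i ^ 2) :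
    deriv (fun s => V s + Vσ s - ∑ i, w s i * y s i) t ≤
      -ε * ∑ i, y' i ^ 2 - εσ * ∑ i, w' i ^ 2 := by
  have hcross := hw.sum_mul_apply hy
  have hcomm : ∑ i, w' i * y t i = ∑ i, y t i * w' i :=
    sum_congr rfl fun i _ => mul_comm _ _
  rw [((hV.hasDerivAt.fun_add hVσ.hasDerivAt).fun_sub hcross).deriv, hcomm]
  linarith

end

theorem stmt6_general (nσ q : ℕ) (ε εσ : ℝ) (hε : 0 < ε) (hεσ : 0 < εσ)
    (hσ : (Fin nσ → ℝ) → (Fin q → ℝ))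
    (Vσ : (Fin nσ → ℝ) → ℝ) (hVσC : ContDiff ℝ 1 Vσ)
    -- a C¹ trajectory of the interconnection: plant output y, uncertainty state xσ
    (y : ℝ → Fin q → ℝ) (y' : ℝ → Fin q → ℝ)
    (xσ : ℝ → Fin nσ → ℝ) (xσ' : ℝ → Fin nσ → ℝ) (w' : ℝ → Fin q → ℝ)
    (hy : ∀ t, HasDerivAt y (y' t) t)
    (hxσ : ∀ t, HasDerivAt xσ (xσ' t) t)
    (hw : ∀ t, HasDerivAt (fun s => hσ (xσ s)) (w' t) t)
    -- the value of the plant storage V(z(t),ξ(t)) along the trajectory, whose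
    -- OSNI dissipation inequality has input w = y_σ = hσ ∘ xσ
    (VP : ℝ → ℝ) (hVP : ∀ t, DifferentiableAt ℝ VP t)
    (hplant : ∀ t, deriv VP t ≤ (∑ i, hσ (xσ t) i * y' t i) - ε * ∑ i, (y' t i)^2)
    -- the uncertainty OSNI dissipation inequality, with input u_σ = y
    (hunc : ∀ t, deriv (fun s => Vσ (xσ s)) t ≤
      (∑ i, y t i * w' t i) - εσ * ∑ i, (w' t i)^2) :
    ∀ t : ℝ,
      deriv (fun s => VP s + Vσ (xσ s) - ∑ i, hσ (xσ s) i * y s i) t ≤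
        -ε * (∑ i, (y' t i)^2) - εσ * (∑ i, (w' t i)^2) ∧
      deriv (fun s => VP s + Vσ (xσ s) - ∑ i, hσ (xσ s) i * y s i) t ≤ 0 := by
  intro t
  have hVσx : DifferentiableAt ℝ (fun s => Vσ (xσ s)) t :=
    (hVσC.differentiable one_ne_zero (xσ t)).comp t (hxσ t).differentiableAt
  have hW := deriv_add_sub_sum_mul_le_of_dissipation (hVP t) hVσx (hw t) (hy t)
    (hplant t) (hunc t)
  have hy2 : 0 ≤ ∑ i, y' t i ^ 2 := sum_nonneg fun i _ => sq_nonneg _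
  have hw2 : 0 ≤ ∑ i, w' t i ^ 2 := sum_nonneg fun i _ => sq_nonneg _
  refine ⟨hW, hW.trans ?_⟩
  linarith [mul_nonneg hε.le hy2, mul_nonneg hεσ.le hw2]

/-- for the positive feedback interconnection (w = y_σ, u_σ = y) of a
plant made nonlinear OSNI with storage value V(z(t),ξ(t)) (strictness ε > 0) and a
nonlinear OSNI uncertainty H_σ with storage V_σ (strictness ε_σ > 0), the function
W = V + V_σ − h_σ(x_σ)ᵀ y satisfies Ẇ ≤ −ε‖ẏ‖² − ε_σ‖ẇ‖² ≤ 0 along any C¹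
trajectory of the interconnection. -/
theorem stmt6 (nσ q : ℕ) (ε εσ : ℝ) (hε : 0 < ε) (hεσ : 0 < εσ)
    (fσ : (Fin nσ → ℝ) → (Fin q → ℝ) → (Fin nσ → ℝ))
    (hσ : (Fin nσ → ℝ) → (Fin q → ℝ)) (hhσC : ContDiff ℝ 1 hσ)
    (Vσ : (Fin nσ → ℝ) → ℝ) (hVσC : ContDiff ℝ 1 Vσ) (hVσ : ∀ x, 0 ≤ Vσ x)
    -- a C¹ trajectory of the interconnection: plant output y, uncertainty state xσ
    (y : ℝ → Fin q → ℝ) (y' : ℝ → Fin q → ℝ)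
    (xσ : ℝ → Fin nσ → ℝ) (xσ' : ℝ → Fin nσ → ℝ) (w' : ℝ → Fin q → ℝ)
    (hy : ∀ t, HasDerivAt y (y' t) t)
    (hxσ : ∀ t, HasDerivAt xσ (xσ' t) t)
    (hxσ' : ∀ t, xσ' t = fσ (xσ t) (y t))  -- u_σ = y
    (hw : ∀ t, HasDerivAt (fun s => hσ (xσ s)) (w' t) t)
    -- the value of the plant storage V(z(t),ξ(t)) along the trajectory, whose
    -- OSNI dissipation inequality has input w = y_σ = hσ ∘ xσ
    (VP : ℝ → ℝ) (hVP : ∀ t, DifferentiableAt ℝ VP t) (hVPnonneg : ∀ t, 0 ≤ VP t)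
    (hplant : ∀ t, deriv VP t ≤ (∑ i, hσ (xσ t) i * y' t i) - ε * ∑ i, (y' t i)^2)
    -- the uncertainty OSNI dissipation inequality, with input u_σ = y
    (hunc : ∀ t, deriv (fun s => Vσ (xσ s)) t ≤
      (∑ i, y t i * w' t i) - εσ * ∑ i, (w' t i)^2) :
    ∀ t : ℝ,
      deriv (fun s => VP s + Vσ (xσ s) - ∑ i, hσ (xσ s) i * y s i) t ≤
        -ε * (∑ i, (y' t i)^2) - εσ * (∑ i, (w' t i)^2) ∧
      deriv (fun s => VP s + Vσ (xσ s) - ∑ i, hσ (xσ s) i * y s i) t ≤ 0 :=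
  stmt6_general nσ q ε εσ hε hεσ hσ Vσ hVσC y y' xσ xσ' w' hy hxσ hw VP hVP hplant hunc
end

section
/- Consider the scalar system ż = −z + ξ1²ξ2, ξ̇1 = v1 + 4zξ1ξ2 − 4ξ1³ξ2² − (4/3)ξ1^{1/3}, ξ̇2 = ξ3, ξ̇3 = v2 + 2zξ1² − 2ξ1⁴ξ2 − 2ξ2 − ξ3, with output y = (ξ1, ξ2). With storage function V(z,ξ) = (z − ξ1²ξ2)² + ξ1^{4/3} + ξ2² + (1/2)ξ3², every C^1 solution satisfies V̇ = −2ż² + v1ξ̇1 + v2ξ̇2 − ξ̇1² − ξ̇2² ≤ vᵀẏ − ‖ẏ‖². Hence the system is nonlinear OSNI with degree of output strictness 1. -/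
/-!
`V` is a sum of squares plus `|ξ1|^{4/3}`, whose derivative is `(4/3) ξ1^{1/3}` even at `ξ1 = 0`
(the exponent `4/3` exceeds `1`). The feedback terms of the system are
designed so that, after eliminating `v1` and `v2` through the equations for `ξ̇1` and `ξ̇3`,
the chain-rule expression for `V̇` collapses to `−2ż² + v1ξ̇1 + v2ξ̇2 − ξ̇1² − ξ̇2²`, which is a
polynomial identity; dropping `−2ż² ≤ 0` gives the OSNI inequality.
-/

noncomputable def realCbrt (x : ℝ) : ℝ :=
  if 0 ≤ x then x ^ ((1:ℝ)/3) else -((-x) ^ ((1:ℝ)/3))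

open Real

lemma abs_rpow_sub_two_mul_self (x : ℝ) : |x| ^ ((4:ℝ)/3 - 2) * x = realCbrt x := by
  have hpos : ∀ y : ℝ, 0 ≤ y → y ^ ((4:ℝ)/3 - 2) * y = y ^ ((1:ℝ)/3) := by
    intro y hy
    rcases hy.eq_or_lt with rfl | hy
    · simp
    · rw [← rpow_add_one hy.ne']
      norm_num
  unfold realCbrt
  split_ifs with hx
  · rw [abs_of_nonneg hx, hpos x hx]
  · rw [abs_of_neg (not_le.mp hx), ← hpos (-x) (by linarith), mul_neg, neg_neg]

lemma hasDerivAt_abs_rpow_four_thirds (x : ℝ) :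
    HasDerivAt (fun y : ℝ => |y| ^ ((4:ℝ)/3)) ((4/3) * realCbrt x) x := by
  have h := hasDerivAt_abs_rpow x (p := (4:ℝ)/3) (by norm_num)
  rwa [mul_assoc, abs_rpow_sub_two_mul_self] at h

section Storage

variable {z a b c : ℝ → ℝ} {z' a' b' c' t : ℝ}

lemma hasDerivAt_storage (hz : HasDerivAt z z' t) (ha : HasDerivAt a a' t)
    (hb : HasDerivAt b b' t) (hc : HasDerivAt c c' t) :
    HasDerivAt (fun s => (z s - (a s)^2 * b s)^2 + |a s| ^ ((4:ℝ)/3) + (b s)^2 + (1/2) * (c s)^2)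
      (2 * (z t - (a t)^2 * b t) * (z' - (2 * a t * a' * b t + (a t)^2 * b'))
        + (4/3) * realCbrt (a t) * a' + 2 * b t * b' + c t * c') t := by
  have h1 := ((hz.sub ((ha.pow 2).mul hb)).pow 2)
  have h2 := (hasDerivAt_abs_rpow_four_thirds (a t)).comp t ha
  have h3 := hb.pow 2
  have h4 := (hc.pow 2).const_mul (1/2 : ℝ)
  refine (((h1.add h2).add h3).add h4).congr_deriv ?_
  simp only [Pi.sub_apply, Pi.mul_apply, Pi.pow_apply, Nat.cast_ofNat]
  ring

end Storage

/-- for the scalar closed-loop system of the example, the storage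
function V(z,ξ) = (z − ξ1²ξ2)² + |ξ1|^{4/3} + ξ2² + (1/2)ξ3² satisfies along
every C¹ solution
V̇ = −2ż² + v1ξ̇1 + v2ξ̇2 − ξ̇1² − ξ̇2² ≤ vᵀẏ − ‖ẏ‖²,
so the system is nonlinear OSNI with degree of output strictness 1. -/
theorem stmt8 (z ξ1 ξ2 ξ3 v1 v2 z' ξ1' ξ2' ξ3' : ℝ → ℝ)
    (hz : ∀ t, HasDerivAt z (z' t) t)
    (hξ1 : ∀ t, HasDerivAt ξ1 (ξ1' t) t)
    (hξ2 : ∀ t, HasDerivAt ξ2 (ξ2' t) t)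
    (hξ3 : ∀ t, HasDerivAt ξ3 (ξ3' t) t)
    (hz' : ∀ t, z' t = -(z t) + (ξ1 t)^2 * ξ2 t)
    (hξ1' : ∀ t, ξ1' t = v1 t + 4 * z t * ξ1 t * ξ2 t - 4 * (ξ1 t)^3 * (ξ2 t)^2
      - (4/3) * realCbrt (ξ1 t))
    (hξ2' : ∀ t, ξ2' t = ξ3 t)
    (hξ3' : ∀ t, ξ3' t = v2 t + 2 * z t * (ξ1 t)^2 - 2 * (ξ1 t)^4 * ξ2 t
      - 2 * ξ2 t - ξ3 t) :
    ∀ t : ℝ,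
      deriv (fun s => (z s - (ξ1 s)^2 * ξ2 s)^2 + |ξ1 s| ^ ((4:ℝ)/3)
          + (ξ2 s)^2 + (1/2) * (ξ3 s)^2) t
        = -2 * (z' t)^2 + v1 t * ξ1' t + v2 t * ξ2' t - (ξ1' t)^2 - (ξ2' t)^2 ∧
      deriv (fun s => (z s - (ξ1 s)^2 * ξ2 s)^2 + |ξ1 s| ^ ((4:ℝ)/3)
          + (ξ2 s)^2 + (1/2) * (ξ3 s)^2) t
        ≤ (v1 t * ξ1' t + v2 t * ξ2' t) - ((ξ1' t)^2 + (ξ2' t)^2) := by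
  intro t
  have rate : deriv (fun s => (z s - (ξ1 s)^2 * ξ2 s)^2 + |ξ1 s| ^ ((4:ℝ)/3)
      + (ξ2 s)^2 + (1/2) * (ξ3 s)^2) t
        = -2 * (z' t)^2 + v1 t * ξ1' t + v2 t * ξ2' t - (ξ1' t)^2 - (ξ2' t)^2 := by
    rw [(hasDerivAt_storage (hz t) (hξ1 t) (hξ2 t) (hξ3 t)).deriv]
    have hv1 : v1 t = ξ1' t - 4 * z t * ξ1 t * ξ2 t + 4 * (ξ1 t)^3 * (ξ2 t)^2
        + (4/3) * realCbrt (ξ1 t) := by linarith [hξ1' t]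
    have hv2 : v2 t = ξ3' t - 2 * z t * (ξ1 t)^2 + 2 * (ξ1 t)^4 * ξ2 t + 2 * ξ2 t + ξ3 t := by
      linarith [hξ3' t]
    rw [hv1, hv2, hz' t, hξ2' t]
    ring
  exact ⟨rate, by rw [rate]; linarith [sq_nonneg (z' t)]⟩
end

section
/- The function W(z,ξ1,ξ2,ξ3,x_σ1,x_σ2) = (z − ξ1²ξ2)² + ξ1^{4/3} + ξ2² + (1/2)ξ3² + (1/4)x_σ1⁴ + (1/2)x_σ2² − ξ1 x_σ1 − ξ2 x_σ2 is positive definite on R^6: W(0) = 0 and W > 0 at every nonzero point. -/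
/-- Young-type inequality: `x*y ≤ (7/8)|x|^{4/3} + (1/5)y⁴`. -/
lemma young_aux (x y : ℝ) : x * y ≤ (7/8) * |x| ^ ((4:ℝ)/3) + (1/5) * y^4 := by
  set a := |x| ^ ((1:ℝ)/3) with ha_def
  have ha : 0 ≤ a := Real.rpow_nonneg (abs_nonneg x) _
  have hb : 0 ≤ |y| := abs_nonneg y
  have ha3 : a^3 = |x| := by
    rw [ha_def, ← Real.rpow_natCast (|x| ^ ((1:ℝ)/3)) 3, ← Real.rpow_mul (abs_nonneg x)]
    norm_num
  have ha4 : a^4 = |x| ^ ((4:ℝ)/3) := by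
    rw [ha_def, ← Real.rpow_natCast (|x| ^ ((1:ℝ)/3)) 4, ← Real.rpow_mul (abs_nonneg x)]
    norm_num
  have hy4 : |y|^4 = y^4 := by rw [← abs_pow, abs_of_nonneg (by positivity)]
  have h1 : x * y ≤ a^3 * |y| := by
    rw [ha3]
    calc x * y ≤ |x * y| := le_abs_self _
    _ = |x| * |y| := abs_mul x y
  have h2 : a^3 * |y| ≤ (7/8) * a^4 + (1/5) * |y|^4 := by
    nlinarith [sq_nonneg (a^2 - (4/5)*a*|y|), mul_nonneg (mul_nonneg ha hb) (sq_nonneg (a-|y|)), mul_nonneg (mul_nonneg hb hb) (sq_nonneg (a - (4/5)*|y|)), mul_nonneg (mul_nonneg ha ha) (mul_nonneg hb hb)]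
  rw [← ha4, ← hy4]
  exact h1.trans h2

/-- W(z,ξ1,ξ2,ξ3,x_σ1,x_σ2) = (z − ξ1²ξ2)² + |ξ1|^{4/3} + ξ2² + (1/2)ξ3²
+ (1/4)x_σ1⁴ + (1/2)x_σ2² − ξ1 x_σ1 − ξ2 x_σ2 is positive definite on ℝ⁶. -/
theorem stmt10 :
    (((0:ℝ) - (0:ℝ)^2 * (0:ℝ))^2 + |(0:ℝ)| ^ ((4:ℝ)/3) + (0:ℝ)^2 + (1/2) * (0:ℝ)^2
      + (1/4) * (0:ℝ)^4 + (1/2) * (0:ℝ)^2 - (0:ℝ) * (0:ℝ) - (0:ℝ) * (0:ℝ) = 0) ∧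
    ∀ z ξ1 ξ2 ξ3 xσ1 xσ2 : ℝ, (z, ξ1, ξ2, ξ3, xσ1, xσ2) ≠ (0, 0, 0, 0, 0, 0) →
      0 < (z - ξ1^2 * ξ2)^2 + |ξ1| ^ ((4:ℝ)/3) + ξ2^2 + (1/2) * ξ3^2
        + (1/4) * xσ1^4 + (1/2) * xσ2^2 - ξ1 * xσ1 - ξ2 * xσ2 := by
  constructor
  · norm_num [Real.zero_rpow (by norm_num : ((4:ℝ)/3) ≠ 0)]
  · intro z ξ1 ξ2 ξ3 xσ1 xσ2 h
    by_cases h1 : ξ1 = 0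
    · subst h1
      simp only [abs_zero, Real.zero_rpow (by norm_num : ((4:ℝ)/3) ≠ 0)]
      by_contra hc
      push_neg at hc
      have hs : z^2 + (1/2)*ξ2^2 + (1/2)*(ξ2 - xσ2)^2 + (1/2)*ξ3^2 + (1/4)*xσ1^4 ≤ 0 := by
        nlinarith [hc]
      have haz : (0:ℝ) ≤ z^2 := sq_nonneg z
      have ha2 : (0:ℝ) ≤ ξ2^2 := sq_nonneg ξ2
      have ha3 : (0:ℝ) ≤ ξ3^2 := sq_nonneg ξ3
      have ha1 : (0:ℝ) ≤ xσ1^4 := by positivity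
      have ha6 : (0:ℝ) ≤ (ξ2 - xσ2)^2 := sq_nonneg _
      have hz : z = 0 := sq_eq_zero_iff.mp (le_antisymm (by linarith) haz)
      have hξ2 : ξ2 = 0 := sq_eq_zero_iff.mp (le_antisymm (by linarith) ha2)
      have hξ3 : ξ3 = 0 := sq_eq_zero_iff.mp (le_antisymm (by linarith) ha3)
      have hx1 : xσ1 = 0 :=
        pow_eq_zero_iff (by norm_num : (4:ℕ) ≠ 0) |>.mp (le_antisymm (by linarith) ha1)
      have hx2 : xσ2 = 0 := by
        have h4 : ξ2 - xσ2 = 0 := sq_eq_zero_iff.mp (le_antisymm (by linarith) ha6)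
        linarith
      exact h (by rw [hz, hξ2, hξ3, hx1, hx2])
    · have hpos : 0 < |ξ1| ^ ((4:ℝ)/3) := Real.rpow_pos_of_pos (abs_pos.mpr h1) _
      have hy := young_aux ξ1 xσ1
      nlinarith [hy, hpos, sq_nonneg (z - ξ1^2 * ξ2), sq_nonneg (ξ2 - xσ2), sq_nonneg ξ3, sq_nonneg (xσ1^2), sq_nonneg ξ2, sq_nonneg xσ2]
end

section
/- For the closed-loop system of the previous statement, the only solution along which ż ≡ 0, ξ̇1 ≡ 0, ξ̇2 ≡ 0, ẋ_σ1 ≡ 0, and ẋ_σ2 ≡ 0 on a nondegenerate time interval is the zero equilibrium: if a constant state (z, ξ1, ξ2, ξ3, x_σ1, x_σ2) satisfies −z + ξ1²ξ2 = 0, x_σ1 + 4zξ1ξ2 − 4ξ1³ξ2² − (4/3)ξ1^{1/3} = 0, ξ3 = 0, x_σ2 + 2zξ1² − 2ξ1⁴ξ2 − 2ξ2 = 0, −x_σ1³ + ξ1 = 0, and −x_σ2 + ξ2 = 0, then z = ξ1 = ξ2 = ξ3 = x_σ1 = x_σ2 = 0. -/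
lemma realCbrt_cube (x : ℝ) : (realCbrt x) ^ 3 = x := by
  unfold realCbrt
  split_ifs with h
  · rw [← Real.rpow_natCast (x ^ ((1:ℝ)/3)) 3, ← Real.rpow_mul h]
    norm_num
  · have h' : (0:ℝ) ≤ -x := by linarith
    rw [neg_pow, ← Real.rpow_natCast ((-x) ^ ((1:ℝ)/3)) 3, ← Real.rpow_mul h']
    norm_num

lemma realCbrt_zero : realCbrt 0 = 0 := by
  simp [realCbrt]

/-- the only equilibrium of the closed-loop interconnection in the
example (obtained from the invariance-principle step) is the origin. -/
theorem stmt12 (z ξ1 ξ2 ξ3 xσ1 xσ2 : ℝ)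
    (h1 : -z + ξ1^2 * ξ2 = 0)
    (h2 : xσ1 + 4 * z * ξ1 * ξ2 - 4 * ξ1^3 * ξ2^2 - (4/3) * realCbrt ξ1 = 0)
    (h3 : ξ3 = 0)
    (h4 : xσ2 + 2 * z * ξ1^2 - 2 * ξ1^4 * ξ2 - 2 * ξ2 = 0)
    (h5 : -xσ1^3 + ξ1 = 0)
    (h6 : -xσ2 + ξ2 = 0) :
    z = 0 ∧ ξ1 = 0 ∧ ξ2 = 0 ∧ ξ3 = 0 ∧ xσ1 = 0 ∧ xσ2 = 0 := by
  have hz : z = ξ1^2 * ξ2 := by linarith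
  subst hz
  have hσ2 : xσ2 = 2 * ξ2 := by nlinarith [h4]
  have hξ2 : ξ2 = 0 := by linarith
  subst hξ2
  have hσ1 : xσ1 = (4/3) * realCbrt ξ1 := by nlinarith [h2]
  have hc := realCbrt_cube ξ1
  have hcube : xσ1^3 = (64/27) * ξ1 := by
    rw [hσ1]; rw [show (4/3 * realCbrt ξ1)^3 = 64/27 * (realCbrt ξ1)^3 by ring, hc]
  have hξ1 : ξ1 = 0 := by linarith [h5, hcube]
  subst hξ1
  have : xσ1 = 0 := by rw [hσ1, realCbrt_zero]; ring
  refine ⟨by ring, rfl, rfl, h3, this, by linarith⟩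
end
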